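/- arXiv:2103.09268 — 8 statements merged into one kernel-verified Lean document; each statement's English description precedes it below -/
import Mathlib

section
/- If a monotone continuous function f : ℝ → ℝ is Lipschitz at all but countably many points (i.e., the set of points s where there is no constant C with |f(s+ε)-f(s)| ≤ C|ε| + o(ε) is countable), then f is locally absolutely continuous. -/
open Metric Set Function

/-- `f` is Lipschitz at the point `s`: there is a constant `C` with
`|f(s+ε)-f(s)| ≤ C|ε| + o(ε)` for small `ε`. -/
def LipschitzPtAt (f : ℝ → ℝ) (s : ℝ) : Prop :=
  ∃ C : ℝ, ∀ η : ℝ, 0 < η → ∃ δ : ℝ, 0 < δ ∧ ∀ ε : ℝ, |ε| < δ →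
    |f (s + ε) - f s| ≤ C * |ε| + η * |ε|

/-- `f` is absolutely continuous on the interval `[a, b]`. -/
def AbsContOn (f : ℝ → ℝ) (a b : ℝ) : Prop :=
  ∀ η : ℝ, 0 < η → ∃ δ : ℝ, 0 < δ ∧ ∀ n : ℕ, ∀ x y : Fin n → ℝ,
    (∀ i, a ≤ x i ∧ x i < y i ∧ y i ≤ b) →
    (∀ i j : Fin n, i < j → y i ≤ x j) →
    (∑ i, (y i - x i)) < δ → (∑ i, |f (y i) - f (x i)|) < η

/-- `f` is locally absolutely continuous: every point has a neighborhood on which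
`f` is absolutely continuous. -/
def LocAbsCont (f : ℝ → ℝ) : Prop :=
  ∀ s : ℝ, ∃ a b : ℝ, a < s ∧ s < b ∧ AbsContOn f a b

/-!
Let `ρ` be the Stieltjes measure of `f`, so that `ρ (a, b] = f b - f a`. At a point where `f` is
Lipschitz, the ratio `ρ (closedBall x r) / (2 r)` stays bounded as `r → 0`; since `f` is
continuous, `ρ` has no atoms, so this holds `ρ`-almost everywhere. Besicovitch's covering theorem
then bounds `ρ` by a multiple of Lebesgue measure on each set where the ratio is bounded by `n`,
hence `ρ ≪ volume`. Finally, an absolutely continuous finite measure is small on sets of small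
Lebesgue measure, which applied to `ρ` on finite unions of intervals is the absolute continuity
of `f`.
-/

open MeasureTheory Filter Topology
open scoped NNReal ENNReal

theorem MeasureTheory.Measure.absolutelyContinuous_of_ae_frequently_closedBall_le
    {α : Type*} [MetricSpace α] [MeasurableSpace α] [BorelSpace α] [SecondCountableTopology α]
    [HasBesicovitchCovering α] {μ ρ : Measure α} [IsLocallyFiniteMeasure μ] [SFinite ρ]
    (h : ∀ᵐ x ∂ρ, ∃ C : ℝ≥0, ∃ᶠ r in 𝓝[>] 0, ρ (closedBall x r) ≤ C * μ (closedBall x r)) :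
    ρ ≪ μ := by
  set T : ℕ → Set α := fun n ↦ {x | ∃ᶠ r in 𝓝[>] 0, ρ (closedBall x r) ≤ n * μ (closedBall x r)}
  have hT : ∀ n s, ρ (s ∩ T n) ≤ ((n : ℝ≥0) • μ) (s ∩ T n) := fun n s ↦
    (Besicovitch.vitaliFamily ρ).measure_le_of_frequently_le _ AbsolutelyContinuous.rfl _
      fun x hx ↦ (Besicovitch.tendsto_filterAt ρ x).frequently hx.2
  have hcover : ρ (⋃ n, T n)ᶜ = 0 := by
    refine ae_iff.1 (h.mono fun x ⟨C, hC⟩ ↦ mem_iUnion.2 ⟨⌈C⌉₊, hC.mono fun r hr ↦ ?_⟩)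
    exact hr.trans (by gcongr; exact_mod_cast Nat.le_ceil C)
  intro s hs
  rw [← measure_inter_conull hcover, inter_iUnion]
  refine measure_iUnion_null fun n ↦ le_zero_iff.1 ((hT n s).trans ?_)
  simp [measure_mono_null inter_subset_left hs]

theorem LipschitzPtAt.exists_eventually_abs_sub_le {f : ℝ → ℝ} {x : ℝ} (hx : LipschitzPtAt f x) :
    ∃ C : ℝ≥0, ∀ᶠ y in 𝓝 x, |f y - f x| ≤ C * |y - x| := by
  obtain ⟨C, hC⟩ := hx
  obtain ⟨δ, hδ, hbound⟩ := hC 1 one_pos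
  refine ⟨(C + 1).toNNReal, ?_⟩
  filter_upwards [Metric.ball_mem_nhds x hδ] with y hy
  have := hbound (y - x) (by rwa [← Real.dist_eq])
  rw [add_sub_cancel] at this
  calc |f y - f x| ≤ (C + 1) * |y - x| := by linarith
    _ ≤ (C + 1).toNNReal * |y - x| := by gcongr; exact Real.le_coe_toNNReal _

theorem pairwise_disjoint_on_Ioc_of_le {ι α : Type*} [LinearOrder ι] [LinearOrder α]
    {x y : ι → α} (hord : ∀ i j, i < j → y i ≤ x j) :
    Pairwise (Disjoint on fun i ↦ Ioc (x i) (y i)) := by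
  intro i j hij
  rcases hij.lt_or_gt with h | h
  · exact Ioc_disjoint_Ioc_of_le (hord i j h)
  · exact (Ioc_disjoint_Ioc_of_le (hord j i h)).symm

theorem MeasureTheory.Measure.AbsolutelyContinuous.exists_pos_forall_measure_lt
    {α : Type*} [MeasurableSpace α] {μ ν : Measure α} [SigmaFinite μ] [IsFiniteMeasure ν]
    (hνμ : ν ≪ μ) {ε : ℝ≥0∞} (hε : ε ≠ 0) : ∃ δ > 0, ∀ s, μ s < δ → ν s < ε := by
  have hdensity : ∀ s, ∫⁻ x in s, ν.rnDeriv μ x ∂μ = ν s := fun s ↦ by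
    rw [← withDensity_apply' _ s, Measure.withDensity_rnDeriv_eq _ _ hνμ]
  obtain ⟨δ, hδ, hsmall⟩ := exists_pos_setLIntegral_lt_of_measure_lt
    (by rw [← setLIntegral_univ, hdensity]; exact measure_ne_top ν univ) hε
  exact ⟨δ, hδ, fun s hs ↦ hdensity s ▸ hsmall s hs⟩

namespace StieltjesFunction

theorem measure_Icc_of_continuousWithinAt (F : StieltjesFunction ℝ) {a : ℝ}
    (ha : ContinuousWithinAt F (Iic a) a) (b : ℝ) :
    F.measure (Icc a b) = ENNReal.ofReal (F b - F a) := by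
  rw [F.measure_Icc, ha.leftLim_eq]

theorem measure_countable_of_continuous (F : StieltjesFunction ℝ) (hF : Continuous F)
    {s : Set ℝ} (hs : s.Countable) : F.measure s = 0 := by
  have : NullSingletonClass F.measure := ⟨fun x ↦ by
    simpa using F.measure_Icc_of_continuousWithinAt hF.continuousWithinAt (a := x) x⟩
  exact hs.measure_zero _

theorem exists_eventually_measure_closedBall_le_of_lipschitzPtAt (F : StieltjesFunction ℝ)
    (hF : Continuous F) {x : ℝ} (hx : LipschitzPtAt F x) :
    ∃ C : ℝ≥0, ∀ᶠ r in 𝓝[>] 0, F.measure (closedBall x r) ≤ C * volume (closedBall x r) := by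
  obtain ⟨C, hC⟩ := hx.exists_eventually_abs_sub_le
  refine ⟨C, ?_⟩
  have hr : Tendsto (fun r ↦ (x + r, x - r)) (𝓝[>] 0) (𝓝 x ×ˢ 𝓝 x) := by
    rw [← nhds_prod_eq]
    exact tendsto_nhdsWithin_of_tendsto_nhds (Continuous.tendsto' (by fun_prop) 0 _ (by simp))
  filter_upwards [self_mem_nhdsWithin, hr.eventually (hC.prod_mk hC)] with r (hr : 0 < r) ⟨h₁, h₂⟩
  rw [Real.closedBall_eq_Icc, F.measure_Icc_of_continuousWithinAt hF.continuousWithinAt,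
    Real.volume_Icc, ← ENNReal.ofReal_coe_nnreal, ← ENNReal.ofReal_mul C.coe_nonneg]
  refine ENNReal.ofReal_le_ofReal ?_
  simp only [add_sub_cancel_left, sub_sub_cancel_left, abs_neg, abs_of_pos hr] at h₁ h₂
  linarith [le_abs_self (F (x + r) - F x), neg_abs_le (F (x - r) - F x)]

theorem measure_iUnion_Ioc {ι : Type*} [Fintype ι] (F : StieltjesFunction ℝ) {x y : ι → ℝ}
    (hxy : ∀ i, x i ≤ y i) (hdisj : Pairwise (Disjoint on fun i ↦ Ioc (x i) (y i))) :
    F.measure (⋃ i, Ioc (x i) (y i)) = ENNReal.ofReal (∑ i, (F (y i) - F (x i))) := by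
  rw [measure_iUnion hdisj fun _ ↦ measurableSet_Ioc, tsum_fintype,
    ENNReal.ofReal_sum_of_nonneg fun i _ ↦ sub_nonneg.2 (F.mono (hxy i))]
  simp_rw [F.measure_Ioc]

theorem absContOn_of_absolutelyContinuous (F : StieltjesFunction ℝ) (hac : F.measure ≪ volume)
    (a b : ℝ) : AbsContOn F a b := by
  intro η hη
  have : IsFiniteMeasure (F.measure.restrict (Icc a b)) :=
    isFiniteMeasure_restrict.2 measure_Icc_lt_top.ne
  obtain ⟨δ, hδ, hsmall⟩ :=
    ((Measure.absolutelyContinuous_of_le Measure.restrict_le_self).trans hac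
      |>.exists_pos_forall_measure_lt (ν := F.measure.restrict (Icc a b)))
      (ENNReal.ofReal_pos.2 hη).ne'
  obtain ⟨d, -, hd, hdδ⟩ := ENNReal.lt_iff_exists_real_btwn.1 hδ
  refine ⟨d, ENNReal.ofReal_pos.1 hd, fun n x y hxy hord hsum ↦ ?_⟩
  have hle : ∀ i, x i ≤ y i := fun i ↦ (hxy i).2.1.le
  have hdisj := pairwise_disjoint_on_Ioc_of_le hord
  have hsub : (⋃ i, Ioc (x i) (y i)) ⊆ Icc a b := iUnion_subset fun i ↦
    Ioc_subset_Icc_self.trans (Icc_subset_Icc (hxy i).1 (hxy i).2.2)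
  have hvol : volume (⋃ i, Ioc (x i) (y i)) < δ := by
    rw [Real.volume_eq_stieltjes_id, StieltjesFunction.id.measure_iUnion_Ioc hle hdisj]
    exact (ENNReal.ofReal_lt_ofReal_iff_of_nonneg
      (Finset.sum_nonneg fun i _ ↦ sub_nonneg.2 (hle i))).2 hsum |>.trans hdδ
  have hρ := hsmall _ hvol
  rw [Measure.restrict_eq_self _ hsub, F.measure_iUnion_Ioc hle hdisj,
    ENNReal.ofReal_lt_ofReal_iff hη] at hρ
  simpa only [abs_of_nonneg (sub_nonneg.2 (F.mono (hle _)))] using hρ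

end StieltjesFunction

theorem monotone_lipschitzPtAt_cocountable_locAbsCont
    (f : ℝ → ℝ) (hmono : Monotone f) (hcont : Continuous f)
    (hcnt : {s : ℝ | ¬ LipschitzPtAt f s}.Countable) :
    LocAbsCont f := by
  let F : StieltjesFunction ℝ := ⟨f, hmono, fun _ ↦ hcont.continuousWithinAt⟩
  have hac : F.measure ≪ volume := by
    refine Measure.absolutelyContinuous_of_ae_frequently_closedBall_le ?_
    filter_upwards [measure_eq_zero_iff_ae_notMem.1 (F.measure_countable_of_continuous hcont hcnt)]
      with x hx
    obtain ⟨C, hC⟩ :=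
      F.exists_eventually_measure_closedBall_le_of_lipschitzPtAt hcont (not_not.1 hx)
    exact ⟨C, hC.frequently⟩
  intro s
  exact ⟨s - 1, s + 1, by linarith, by linarith, F.absContOn_of_absolutelyContinuous hac _ _⟩
end

section
/- Let f : ℝ → ℝ be a monotone continuous function and E ⊆ ℝ a bounded Lebesgue null set such that f is Lipschitz at every point of E except countably many. Then the image f(E) is Lebesgue null. -/
open Metric Set Function MeasureTheory

/-!
The points where `f` is Lipschitz split into countably many strata, indexed by `n : ℕ`, on which
`|f t - f s| ≤ (n + 1) |t - s|` whenever `|t - s| < 1 / (n + 1)`. Two points of a stratum at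
distance `< 1 / (n + 1)` can be compared through either one of them, so `f` is locally Lipschitz
on each stratum, and a locally Lipschitz map sends `μH[1]`-null sets, i.e. Lebesgue null sets, to
null sets. The remaining points form a countable set, whose image is countable.
-/

open scoped NNReal ENNReal

theorem LocallyLipschitzOn.hausdorffMeasure_image_null {X Y : Type*}
    [EMetricSpace X] [SecondCountableTopology X] [MeasurableSpace X] [BorelSpace X]
    [EMetricSpace Y] [MeasurableSpace Y] [BorelSpace Y] {f : X → Y} {s : Set X}
    (hf : LocallyLipschitzOn s f) {d : ℝ} (hd : 0 ≤ d) (hs : μH[d] s = 0) :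
    μH[d] (f '' s) = 0 := by
  choose! K t ht hK using fun x (hx : x ∈ s) => hf hx
  obtain ⟨c, hcs, hc, hcover⟩ := TopologicalSpace.countable_cover_nhdsWithin ht
  have himage : f '' s ⊆ ⋃ x ∈ c, f '' (s ∩ t x) := by
    rintro _ ⟨y, hy, rfl⟩
    obtain ⟨x, hx, hyx⟩ := mem_iUnion₂.1 (hcover hy)
    exact mem_biUnion hx ⟨y, ⟨hy, hyx⟩, rfl⟩
  refine measure_mono_null himage ((measure_biUnion_null_iff hc).2 fun x hx => ?_)
  have hpiece : μH[d] (f '' (s ∩ t x)) ≤ (K x : ℝ≥0∞) ^ d * μH[d] (s ∩ t x) :=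
    ((hK x (hcs hx)).mono inter_subset_right).hausdorffMeasure_image_le hd
  rwa [measure_mono_null inter_subset_left hs, mul_zero, nonpos_iff_eq_zero] at hpiece

theorem locallyLipschitzOn_of_dist_le_mul {X Y : Type*} [PseudoMetricSpace X]
    [PseudoMetricSpace Y] {f : X → Y} {s : Set X} {K : ℝ≥0} {δ : ℝ} (hδ : 0 < δ)
    (h : ∀ x ∈ s, ∀ y ∈ s, dist y x < δ → dist (f y) (f x) ≤ K * dist y x) :
    LocallyLipschitzOn s f := fun x _ =>
  ⟨K, s ∩ ball x (δ / 2), inter_mem_nhdsWithin s (ball_mem_nhds x (half_pos hδ)),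
    LipschitzOnWith.of_dist_le_mul fun y hy z hz => h z hz.1 y hy.1 <| by
      linarith [dist_triangle_right y z x, mem_ball.1 hy.2, mem_ball.1 hz.2]⟩

theorem LipschitzPtAt.exists_nat {f : ℝ → ℝ} {s : ℝ} (hf : LipschitzPtAt f s) :
    ∃ n : ℕ, ∀ t, dist t s < ((n : ℝ) + 1)⁻¹ →
      dist (f t) (f s) ≤ ((n + 1 : ℕ) : ℝ≥0) * dist t s := by
  obtain ⟨C, hC⟩ := hf
  obtain ⟨δ, hδ, hbound⟩ := hC 1 one_pos
  obtain ⟨n, hn⟩ := exists_nat_gt (max C δ⁻¹)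
  refine ⟨n, fun t ht => ?_⟩
  have hradius : ((n : ℝ) + 1)⁻¹ < δ :=
    inv_lt_of_inv_lt₀ hδ ((le_max_right _ _).trans_lt (hn.trans (lt_add_one _)))
  simp only [Real.dist_eq] at ht ⊢
  have hst := hbound (t - s) (ht.trans hradius)
  rw [add_sub_cancel] at hst
  push_cast
  nlinarith [abs_nonneg (t - s), le_max_left C δ⁻¹]

theorem image_null_of_monotone_lipschitzPtAt_general
    (f : ℝ → ℝ) (E : Set ℝ) (hnull : volume E = 0)
    (hcnt : {s ∈ E | ¬ LipschitzPtAt f s}.Countable) :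
    volume (f '' E) = 0 := by
  set S : ℕ → Set ℝ := fun n => {s ∈ E | ∀ t, dist t s < ((n : ℝ) + 1)⁻¹ →
    dist (f t) (f s) ≤ ((n + 1 : ℕ) : ℝ≥0) * dist t s}
  have hcover : E ⊆ {s ∈ E | ¬ LipschitzPtAt f s} ∪ ⋃ n, S n := by
    intro s hs
    by_cases h : LipschitzPtAt f s
    · obtain ⟨n, hn⟩ := h.exists_nat
      exact Or.inr (mem_iUnion.2 ⟨n, hs, hn⟩)
    · exact Or.inl ⟨hs, h⟩
  have hstratum : ∀ n, volume (f '' S n) = 0 := fun n => by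
    rw [← hausdorffMeasure_real] at hnull ⊢
    exact (locallyLipschitzOn_of_dist_le_mul (by positivity) fun s hs t _ => hs.2 t)
      |>.hausdorffMeasure_image_null zero_le_one (measure_mono_null (sep_subset _ _) hnull)
  refine measure_mono_null (image_mono hcover) ?_
  rw [image_union, image_iUnion, measure_union_null_iff]
  exact ⟨(hcnt.image f).measure_zero _, measure_iUnion_null hstratum⟩

theorem image_null_of_monotone_lipschitzPtAt
    (f : ℝ → ℝ) (hmono : Monotone f) (hcont : Continuous f)
    (E : Set ℝ) (hbdd : Bornology.IsBounded E) (hnull : volume E = 0)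
    (hcnt : {s ∈ E | ¬ LipschitzPtAt f s}.Countable) :
    volume (f '' E) = 0 :=
  image_null_of_monotone_lipschitzPtAt_general f E hnull hcnt
end

section
/- Let X be a 2-dimensional real normed space, r : ℝ → S_X a C¹-smooth map with ‖r'(s)‖ = 1 for all s, and L = min{s ∈ [0,∞) : r(s) = -r(0)}. Then r(s) = -r(s+L) = r(s+2L) for every s ∈ ℝ. -/
open Metric Set Function Module

open Real Filter Topology

/-!
Transport `X` to `ℂ` by a linear isomorphism and lift the argument of `r` to a differentiable
angle `φ : ℝ → ℝ`. Differentiability of the norm makes `r'` transversal to `r`, so the angular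
speed never vanishes and, by Darboux, `φ` is strictly monotone after a choice of orientation.
Moreover `r t = -r s` exactly when `φ t - φ s ≡ π (mod 2π)`, so minimality of `L` gives
`φ L = φ 0 + π`. The time `σ u` at which the angle has advanced by `π`
satisfies `r ∘ σ = -r`, so unit speed forces `σ' = 1`, and `σ u = u + L` on the open interval of
those `u` for which such a time exists. That interval is then `{u | φ (u + L) = φ u + π}`, which is
closed, hence it is all of `ℝ`.
-/

theorem StrictMono.isOpen_range_of_continuous {φ : ℝ → ℝ} (hmono : StrictMono φ)
    (hcont : Continuous φ) : IsOpen (range φ) := by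
  have hconn : OrdConnected (range φ) := (isPreconnected_range hcont).ordConnected
  refine isOpen_iff_mem_nhds.2 ?_
  rintro _ ⟨s, rfl⟩
  refine mem_of_superset (Ioo_mem_nhds (hmono (sub_one_lt s)) (hmono (lt_add_one s))) ?_
  exact Ioo_subset_Icc_self.trans (hconn.out ⟨_, rfl⟩ ⟨_, rfl⟩)

theorem StrictMono.eq_add_pi_of_isLeast {φ : ℝ → ℝ} (hmono : StrictMono φ) (hcont : Continuous φ)
    {L : ℝ} (hL : IsLeast {s | 0 ≤ s ∧ ((φ s - φ 0 : ℝ) : Angle) = π} L) : φ L = φ 0 + π := by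
  obtain ⟨⟨hL0, hLπ⟩, hmin⟩ := hL
  obtain ⟨k, hk⟩ := Angle.angle_eq_iff_two_pi_dvd_sub.1 hLπ
  have hLpos : 0 < L := hL0.lt_of_ne <| by
    rintro rfl
    exact Angle.pi_ne_zero (by simpa using hLπ.symm)
  have hk_nonneg : 0 ≤ k := by
    have : φ 0 < φ L := hmono hLpos
    by_contra! hk_neg
    have : (k : ℝ) ≤ -1 := by exact_mod_cast Int.le_sub_one_of_lt hk_neg
    nlinarith [pi_pos]
  have hk_nonpos : k ≤ 0 := by
    by_contra! hk_pos
    have : (1 : ℝ) ≤ k := by exact_mod_cast hk_pos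
    obtain ⟨t, ht, hφt⟩ : φ 0 + π ∈ φ '' Ioo 0 L :=
      intermediate_value_Ioo hL0 hcont.continuousOn ⟨by linarith [pi_pos], by nlinarith [pi_pos]⟩
    have : L ≤ t := hmin ⟨ht.1.le, by rw [hφt, add_sub_cancel_left]⟩
    exact this.not_gt ht.2
  obtain rfl : k = 0 := le_antisymm hk_nonpos hk_nonneg
  push_cast at hk
  linarith

section InverseFunction

variable {φ φ' : ℝ → ℝ} (hφ : ∀ u, HasDerivAt φ (φ' u) u) (hφ' : ∀ u, 0 < φ' u)
include hφ hφ'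

theorem isOpen_range_of_hasDerivAt_pos : IsOpen (range φ) :=
  (strictMono_of_hasDerivAt_pos hφ hφ').isOpen_range_of_continuous
    (continuous_iff_continuousAt.2 fun u => (hφ u).continuousAt)

theorem hasDerivAt_invFun_of_hasDerivAt_pos {y : ℝ} (hy : y ∈ range φ) :
    HasDerivAt (invFun φ) (φ' (invFun φ y))⁻¹ y := by
  have hinv := leftInverse_invFun (strictMono_of_hasDerivAt_pos hφ hφ').injective
  have hopen := isOpen_range_of_hasDerivAt_pos hφ hφ'
  have hcont : ContinuousAt (invFun φ) y := by
    refine continuousAt_of_monotoneOn_of_image_mem_nhds (s := range φ) ?_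
      (hopen.mem_nhds hy) ?_
    · rintro _ ⟨a, rfl⟩ _ ⟨b, rfl⟩ hab
      rw [hinv a, hinv b]
      exact (strictMono_of_hasDerivAt_pos hφ hφ').le_iff_le.1 hab
    · rw [← image_univ, hinv.image_image]
      exact univ_mem
  exact HasDerivAt.of_local_left_inverse hcont (hφ _) (hφ' _).ne'
    (eventually_of_mem (hopen.mem_nhds hy) fun z hz => invFun_eq hz)

theorem apply_add_eq_add_of_deriv_eq {c L : ℝ} (hL : φ L = φ 0 + c)
    (hder : ∀ u v, φ v = φ u + c → φ' v = φ' u) (u : ℝ) : φ (u + L) = φ u + c := by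
  have hmono := strictMono_of_hasDerivAt_pos hφ hφ'
  have hcont : Continuous φ := continuous_iff_continuousAt.2 fun u => (hφ u).continuousAt
  set D := {u | φ u + c ∈ range φ}
  set σ := fun u => invFun φ (φ u + c)
  have hσφ : ∀ u ∈ D, φ (σ u) = φ u + c := fun u hu => invFun_eq hu
  have hσ : ∀ u ∈ D, HasDerivAt σ 1 u := by
    intro u hu
    have := (hasDerivAt_invFun_of_hasDerivAt_pos hφ hφ' hu).comp u ((hφ u).add_const c)
    rwa [hder u _ (hσφ u hu), inv_mul_cancel₀ (hφ' u).ne'] at this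
  have hD_open : IsOpen D :=
    (isOpen_range_of_hasDerivAt_pos hφ hφ').preimage (hcont.add continuous_const)
  have hD_conn : IsPreconnected D :=
    ((isPreconnected_range hcont).ordConnected.preimage_mono
      fun _ _ h => (add_le_add_iff_right c).2 (hmono.monotone h)).isPreconnected
  have h0 : 0 ∈ D := ⟨L, hL⟩
  have hσL : EqOn σ (· + L) D := by
    refine hD_open.eqOn_of_deriv_eq hD_conn
      (fun u hu => (hσ u hu).differentiableAt.differentiableWithinAt)
      (differentiable_id.add_const L).differentiableOn (fun u hu => ?_) h0 ?_
    · simp [(hσ u hu).deriv]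
    · simp only [σ, ← hL, zero_add]
      exact leftInverse_invFun hmono.injective L
  have hD_eq : D = {u | φ (u + L) = φ u + c} :=
    ext fun u => ⟨fun hu => (congrArg φ (hσL hu)).symm.trans (hσφ u hu), fun hu => ⟨u + L, hu⟩⟩
  have hD_univ : D = univ :=
    IsClopen.eq_univ ⟨hD_eq ▸ isClosed_eq (hcont.comp (continuous_add_const L))
      (hcont.add continuous_const), hD_open⟩ ⟨0, h0⟩
  have hu : u ∈ D := hD_univ ▸ mem_univ u
  exact (congrArg φ (hσL hu)).symm.trans (hσφ u hu)

end InverseFunction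

theorem exists_hasDerivAt_eq_mul_exp {z z' : ℝ → ℂ} (hz : ∀ u, HasDerivAt z (z' u) u)
    (hz' : Continuous z') (h0 : ∀ u, z u ≠ 0) :
    ∃ H : ℝ → ℂ, (∀ u, HasDerivAt H (z' u / z u) u) ∧ ∀ u, z u = z 0 * Complex.exp (H u) := by
  have hw : Continuous fun u => z' u / z u :=
    hz'.div (continuous_iff_continuousAt.2 fun u => (hz u).continuousAt) h0
  set H := fun u => ∫ t in (0 : ℝ)..u, z' t / z t
  have hH : ∀ u, HasDerivAt H (z' u / z u) u :=
    fun u => (hw.integral_hasStrictDerivAt 0 u).hasDerivAt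
  have hconst : ∀ u, HasDerivAt (fun v => z v * Complex.exp (-H v)) 0 u := by
    intro u
    have hexp : HasDerivAt (fun v => Complex.exp (-H v)) (Complex.exp (-H u) * -(z' u / z u)) u :=
      (hH u).neg.cexp
    refine ((hz u).mul hexp).congr_deriv ?_
    field_simp [h0 u]
    ring
  refine ⟨H, hH, fun u => ?_⟩
  have := is_const_of_deriv_eq_zero (fun v => (hconst v).differentiableAt)
    (fun v => (hconst v).deriv) u 0
  simp only [H, intervalIntegral.integral_same, neg_zero, Complex.exp_zero, mul_one] at this
  rw [← this, mul_assoc, ← Complex.exp_add, neg_add_cancel, Complex.exp_zero, mul_one]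

theorem Complex.arg_exp_coe_angle (w : ℂ) : (arg (exp w) : Angle) = w.im := by
  rw [arg_exp, Angle.coe_toIocMod]

theorem Complex.sameRay_mul_exp_neg_iff {z₀ a b : ℂ} (hz₀ : z₀ ≠ 0) :
    SameRay ℝ (z₀ * exp a) (-(z₀ * exp b)) ↔ ((a.im - b.im : ℝ) : Angle) = π := by
  have ha : z₀ * exp a ≠ 0 := mul_ne_zero hz₀ (exp_ne_zero a)
  have hb : z₀ * exp b ≠ 0 := mul_ne_zero hz₀ (exp_ne_zero b)
  rw [sameRay_iff, or_iff_right ha, or_iff_right (neg_ne_zero.2 hb), ← arg_coe_angle_eq_iff,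
    arg_neg_coe_angle hb, arg_mul_coe_angle hz₀ (exp_ne_zero a),
    arg_mul_coe_angle hz₀ (exp_ne_zero b), arg_exp_coe_angle, arg_exp_coe_angle, Angle.coe_sub,
    add_assoc, add_right_inj, sub_eq_iff_eq_add']

theorem eq_zero_of_hasDerivAt_eq_smul_self {E : Type*} [NormedAddCommGroup E] [NormedSpace ℝ E]
    {γ : ℝ → E} {u c : ℝ} (hn : DifferentiableAt ℝ (‖·‖) (γ u)) (hγ : HasDerivAt γ (c • γ u) u)
    (hconst : HasDerivAt (fun v => ‖γ v‖) 0 u) (h0 : γ u ≠ 0) : c = 0 := by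
  have := (hn.hasFDerivAt.comp_hasDerivAt u hγ).unique hconst
  rw [map_smul, hn.fderiv_norm_self, smul_eq_mul, mul_eq_zero] at this
  exact this.resolve_right (norm_ne_zero_iff.2 h0)

section Curve

variable {X : Type*} [NormedAddCommGroup X] [NormedSpace ℝ X]

theorem neg_eq_iff_of_map_eq_mul_exp (e : X ≃L[ℝ] ℂ) {x y : X} {z₀ a b : ℂ} (hz₀ : z₀ ≠ 0)
    (hxy : ‖x‖ = ‖y‖) (hx : e x = z₀ * Complex.exp a) (hy : e y = z₀ * Complex.exp b) :
    x = -y ↔ ((a.im - b.im : ℝ) : Angle) = π := by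
  rw [← sameRay_iff_of_norm_eq (by rw [norm_neg, hxy]), ← e.injective.sameRay_map_iff, map_neg,
    hx, hy]
  exact Complex.sameRay_mul_exp_neg_iff hz₀

theorem exists_angle_of_finrank_eq_two (hdim : finrank ℝ X = 2)
    (hsmooth : ∀ x : X, x ≠ 0 → DifferentiableAt ℝ (fun y : X => ‖y‖) x)
    {r : ℝ → X} (hr : ContDiff ℝ 1 r) (hr1 : ∀ s, ‖r s‖ = 1) (hdr : ∀ s, ‖deriv r s‖ = 1) :
    ∃ φ φ' : ℝ → ℝ, (∀ u, HasDerivAt φ (φ' u) u) ∧ (∀ u, 0 < φ' u) ∧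
      ∀ s t, r t = -r s ↔ ((φ t - φ s : ℝ) : Angle) = π := by
  have : FiniteDimensional ℝ X := .of_finrank_eq_succ hdim
  let e : X ≃L[ℝ] ℂ := .ofFinrankEq (by rw [hdim, Complex.finrank_real_complex])
  have hrd : ∀ u, HasDerivAt r (deriv r u) u :=
    fun u => ((hr.differentiable one_ne_zero) u).hasDerivAt
  have hr0 : ∀ u, r u ≠ 0 := fun u => norm_ne_zero_iff.1 (by rw [hr1]; exact one_ne_zero)
  have hz0 : ∀ u, e (r u) ≠ 0 := fun u => (map_ne_zero_iff e e.injective).2 (hr0 u)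
  obtain ⟨H, hH, hexp⟩ := exists_hasDerivAt_eq_mul_exp
    (fun u => e.hasFDerivAt.comp_hasDerivAt u (hrd u))
    (e.continuous.comp (hr.continuous_deriv le_rfl)) hz0
  simp only [comp_apply] at hH hexp
  set θ' := fun u => (e (deriv r u) / e (r u)).im
  have hθ : ∀ u, HasDerivAt (fun v => (H v).im) (θ' u) u :=
    fun u => Complex.imCLM.hasFDerivAt.comp_hasDerivAt u (hH u)
  have hθ' : ∀ u, θ' u ≠ 0 := by
    intro u hu
    set c := (e (deriv r u) / e (r u)).re
    have hc : deriv r u = c • r u := by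
      apply e.injective
      rw [map_smul, Complex.real_smul, ← div_mul_cancel₀ (e (deriv r u)) (hz0 u)]
      congr 1
      exact Complex.ext rfl (by simpa using hu)
    have hconst : HasDerivAt (fun v => ‖r v‖) 0 u := by
      simpa only [hr1] using hasDerivAt_const u (1 : ℝ)
    have hc0 := eq_zero_of_hasDerivAt_eq_smul_self (hsmooth _ (hr0 u)) (hc ▸ hrd u) hconst (hr0 u)
    have := hdr u
    rw [hc, hc0, zero_smul, norm_zero] at this
    exact zero_ne_one this
  have hanti : ∀ s t, r t = -r s ↔ (((H t).im - (H s).im : ℝ) : Angle) = π := fun s t =>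
    neg_eq_iff_of_map_eq_mul_exp e (hz0 0) (by rw [hr1, hr1]) (hexp t) (hexp s)
  rcases hasDerivWithinAt_forall_lt_or_forall_gt_of_forall_ne convex_univ
    (fun u _ => (hθ u).hasDerivWithinAt) (fun u _ => hθ' u) with hneg | hpos
  · refine ⟨fun u => -(H u).im, fun u => -θ' u, fun u => (hθ u).neg,
      fun u => neg_pos.2 (hneg u trivial), fun s t => ?_⟩
    rw [hanti, ← neg_sub', Angle.coe_neg, neg_eq_iff_eq_neg, Angle.neg_coe_pi]
  · exact ⟨_, _, hθ, fun u => hpos u trivial, hanti⟩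

variable {r r' : ℝ → X} (hr : ∀ u, HasDerivAt r (r' u) u) (hr' : ∀ u, ‖r' u‖ = 1)
  {φ φ' : ℝ → ℝ} (hφ : ∀ u, HasDerivAt φ (φ' u) u) (hφ' : ∀ u, 0 < φ' u)
  (hanti : ∀ s t, r t = -r s ↔ ((φ t - φ s : ℝ) : Angle) = π)
include hr hr' hφ hφ' hanti

theorem deriv_eq_of_eq_add_pi {u v : ℝ} (huv : φ v = φ u + π) : φ' v = φ' u := by
  set σ := fun w => invFun φ (φ w + π)
  have hσu : σ u = v := by
    simp only [σ, ← huv]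
    exact leftInverse_invFun (strictMono_of_hasDerivAt_pos hφ hφ').injective v
  have hσ : HasDerivAt σ ((φ' v)⁻¹ * φ' u) u := by
    have := (hasDerivAt_invFun_of_hasDerivAt_pos hφ hφ' ⟨v, huv⟩).comp u ((hφ u).add_const π)
    rwa [← hσu]
  have hrσ : (fun w => r (σ w)) =ᶠ[𝓝 u] fun w => -r w := by
    have hcont : Continuous fun w => φ w + π :=
      (continuous_iff_continuousAt.2 fun u => (hφ u).continuousAt).add continuous_const
    filter_upwards [hcont.continuousAt.preimage_mem_nhds
      ((isOpen_range_of_hasDerivAt_pos hφ hφ').mem_nhds ⟨v, huv⟩)] with w hw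
    exact (hanti w (σ w)).2 (by rw [invFun_eq hw, add_sub_cancel_left])
  have hrv : HasDerivAt r (r' v) (σ u) := by rw [hσu]; exact hr v
  have hscale : ((φ' v)⁻¹ * φ' u) • r' v = -r' u :=
    ((hrv.scomp u hσ).congr_of_eventuallyEq hrσ.symm).unique (hr u).neg
  have hone : (φ' v)⁻¹ * φ' u = 1 := by
    have := congrArg norm hscale
    rwa [norm_smul, norm_neg, hr', hr', mul_one, Real.norm_of_nonneg
      (mul_pos (inv_pos.2 (hφ' v)) (hφ' u)).le] at this
  exact (inv_mul_eq_one₀ (hφ' v).ne').1 hone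

theorem add_eq_neg_of_isLeast {L : ℝ} (hL : IsLeast {s | 0 ≤ s ∧ r s = -r 0} L) (u : ℝ) :
    r (u + L) = -r u := by
  have hφL : φ L = φ 0 + π := by
    refine (strictMono_of_hasDerivAt_pos hφ hφ').eq_add_pi_of_isLeast
      (continuous_iff_continuousAt.2 fun u => (hφ u).continuousAt) ?_
    simpa only [hanti] using hL
  rw [hanti, apply_add_eq_add_of_deriv_eq hφ hφ' hφL
    (fun _ _ => deriv_eq_of_eq_add_pi hr hr' hφ hφ' hanti) u, add_sub_cancel_left]

end Curve

theorem natural_param_antiperiodic_general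
    (X : Type*) [NormedAddCommGroup X] [NormedSpace ℝ X]
    (hdim : finrank ℝ X = 2)
    (hsmooth : ∀ x : X, x ≠ 0 → DifferentiableAt ℝ (fun y : X => ‖y‖) x)
    (r : ℝ → X) (hr : ContDiff ℝ 1 r)
    (hr1 : ∀ s, ‖r s‖ = 1) (hdr : ∀ s, ‖deriv r s‖ = 1)
    (L : ℝ) (hL : IsLeast {s : ℝ | 0 ≤ s ∧ r s = -r 0} L) :
    ∀ s : ℝ, r s = -r (s + L) ∧ r s = r (s + 2 * L) := by
  obtain ⟨φ, φ', hφ, hφ', hanti⟩ := exists_angle_of_finrank_eq_two hdim hsmooth hr hr1 hdr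
  have hshift := add_eq_neg_of_isLeast
    (fun u => ((hr.differentiable one_ne_zero) u).hasDerivAt) hdr hφ hφ' hanti hL
  intro s
  exact ⟨by rw [hshift, neg_neg], by rw [two_mul, ← add_assoc, hshift, hshift, neg_neg]⟩

/-- Periodicity of a natural parameterization of the unit sphere of a smooth
2-dimensional Banach space: `r(s) = -r(s+L) = r(s+2L)` where `L` is the half-length. -/
theorem natural_param_antiperiodic
    (X : Type*) [NormedAddCommGroup X] [NormedSpace ℝ X]
    (hdim : finrank ℝ X = 2)
    (hsmooth : ∀ x : X, x ≠ 0 → DifferentiableAt ℝ (fun y : X => ‖y‖) x)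
    (r : ℝ → X) (hr : ContDiff ℝ 1 r)
    (hr1 : ∀ s, ‖r s‖ = 1) (hdr : ∀ s, ‖deriv r s‖ = 1)
    (L : ℝ) (hL : IsLeast {s : ℝ | 0 ≤ s ∧ r s = -r 0} L) (hLpos : 0 < L) :
    ∀ s : ℝ, r s = -r (s + L) ∧ r s = r (s + 2 * L) :=
  natural_param_antiperiodic_general X hdim hsmooth r hr hr1 hdr L hL
end

section
/- Let r : ℝ → S_X be a natural parameterization of the unit sphere of a smooth 2-dimensional Banach space with phase shift φ. Then the set of points at which r is twice differentiable is Lebesgue co-null in ℝ. -/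
open Metric Set Function Module Asymptotics MeasureTheory

/-- `φ` is the phase shift of the natural parameterization `r`. -/
def IsPhaseShift {X : Type*} [NormedAddCommGroup X] [NormedSpace ℝ X]
    (r : ℝ → X) (φ : ℝ → ℝ) : Prop :=
  ∀ s : ℝ, s < φ s ∧ deriv r s = r (φ s) ∧ ∀ t : ℝ, s < t → deriv r s = r t → φ s ≤ t

/-- `f` is twice differentiable at `s` with first derivative `d1` and second
derivative `d2`: `f(s+ε) = f(s) + d1·ε + ½·d2·ε² + o(ε²)`. -/
def HasSecondDerivAt' {X : Type*} [NormedAddCommGroup X] [NormedSpace ℝ X]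
    (f : ℝ → X) (s : ℝ) (d1 d2 : X) : Prop :=
  (fun ε : ℝ => f (s + ε) - f s - ε • d1 - (ε ^ 2 / 2) • d2) =o[nhds (0 : ℝ)]
    fun ε : ℝ => ε ^ 2

/-! Since `r' = r ∘ φ` with `φ` monotone, Lebesgue's theorem makes `φ`, hence `r'`,
differentiable almost everywhere; and a function whose derivative is differentiable at a point
has a second-order Taylor expansion there, by the mean value inequality applied to the
remainder. -/

section TaylorExpansion

open Filter Topology

variable {E : Type*} [NormedAddCommGroup E] [NormedSpace ℝ E]

theorem hasSecondDerivAt'_of_hasDerivAt {f f' : ℝ → E} {s : ℝ} {d2 : E}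
    (hf : ∀ x, HasDerivAt f (f' x) x) (hf' : HasDerivAt f' d2 s) :
    HasSecondDerivAt' f s (f' s) d2 := by
  set R : ℝ → E := fun x => f x - f s - (x - s) • f' s - ((x - s) ^ 2 / 2) • d2
  have hR : ∀ x, HasDerivAt R (f' x - f' s - (x - s) • d2) x := by
    intro x
    have hsq : HasDerivAt (fun y : ℝ => (y - s) ^ 2 / 2) (x - s) x := by
      simpa using (((hasDerivAt_id x).sub_const s).pow 2).div_const 2
    exact ((((hf x).sub_const (f s)).sub (((hasDerivAt_id x).sub_const s).smul_const (f' s))).sub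
      (hsq.smul_const d2)).congr_deriv (by rw [one_smul])
  have hR' : (fun x => f' x - f' s - (x - s) • d2) =o[𝓝 s] fun x => (x - s) ^ 1 := by
    simpa using hasDerivAt_iff_isLittleO.mp hf'
  have hRo : (fun x => R x - R s) =o[𝓝 s] fun x => (x - s) ^ 2 := by
    simpa using convex_univ.isLittleO_pow_succ_real (mem_univ s)
      (fun x _ => (hR x).hasDerivWithinAt) (by simpa using hR')
  have hshift : Tendsto (fun ε : ℝ => s + ε) (𝓝 0) (𝓝 s) := by
    simpa using (continuous_const_add s).tendsto 0
  simpa [HasSecondDerivAt', R, comp_def] using hRo.comp_tendsto hshift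

end TaylorExpansion

theorem twice_differentiable_conull_general
    (X : Type*) [NormedAddCommGroup X] [NormedSpace ℝ X]
    (r : ℝ → X) (hr : ContDiff ℝ 1 r)
    (φ : ℝ → ℝ) (hφ : IsPhaseShift r φ)
    (hφm : Monotone φ) :
    volume {s : ℝ | ¬ ∃ d2 : X, HasSecondDerivAt' r s (deriv r s) d2} = 0 := by
  have hrd : Differentiable ℝ r := hr.differentiable one_ne_zero
  have hderiv : deriv r = r ∘ φ := funext fun s => (hφ s).2.1
  rw [← ae_iff]
  filter_upwards [hφm.ae_differentiableAt] with s hφs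
  have hr'd : HasDerivAt (r ∘ φ) (deriv φ s • deriv r (φ s)) s :=
    (hrd (φ s)).hasDerivAt.scomp s hφs.hasDerivAt
  rw [← hderiv] at hr'd
  exact ⟨_, hasSecondDerivAt'_of_hasDerivAt (fun x => (hrd x).hasDerivAt) hr'd⟩

theorem twice_differentiable_conull
    (X : Type*) [NormedAddCommGroup X] [NormedSpace ℝ X]
    (hdim : finrank ℝ X = 2)
    (hsmooth : ∀ x : X, x ≠ 0 → DifferentiableAt ℝ (fun y : X => ‖y‖) x)
    (r : ℝ → X) (hr : ContDiff ℝ 1 r)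
    (hr1 : ∀ s, ‖r s‖ = 1) (hdr : ∀ s, ‖deriv r s‖ = 1)
    (φ : ℝ → ℝ) (hφ : IsPhaseShift r φ)
    (hφc : Continuous φ) (hφm : Monotone φ) :
    volume {s : ℝ | ¬ ∃ d2 : X, HasSecondDerivAt' r s (deriv r s) d2} = 0 :=
  twice_differentiable_conull_general X r hr φ hφ hφm
end

section
/- Let X be a strictly convex smooth 2-dimensional Banach space with natural parameterization r : ℝ → S_X, and let a, b, s ∈ ℝ satisfy 0 ≠ r(b) - r(a) = ‖r(b)-r(a)‖·r(s). If r is twice differentiable at both b and s, then the function ν : ℝ → ℝ, ν(ε) = ‖r(b+ε) - r(a)‖, is twice differentiable at 0, with ν'(0) equal to the r(s)-coordinate of r'(b) in the basis (r(s), r'(s)). -/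
/-!
Put `g ε = r (b + ε) - r a`, so `g 0 = c • r s` with `c = ‖r b - r a‖ > 0`. A curve on the unit
sphere cannot move radially, so `r s` and `r' s` form a basis of `X`. Matching coefficients in
this basis, one finds quadratic polynomials `λ ε = c + x ε + O(ε²)` and `φ ε = s + O(ε)` for which
`g` and `λ • (r ∘ φ)` have the same second-order expansion at `0`. Since `‖r (φ ε)‖ = 1` and
`λ ε > 0` near `0`, `|‖g ε‖ - λ ε| ≤ ‖g ε - λ ε • r (φ ε)‖ = o(ε²)`, so `ν = ‖g‖` inherits the
expansion of the polynomial `λ`.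
-/

open Metric Set Function Module Asymptotics Filter Topology

theorem Asymptotics.IsLittleO.smul_const {X α : Type*} [NormedAddCommGroup X] [NormedSpace ℝ X]
    {l : Filter α} {k g : α → ℝ} (h : k =o[l] g) (v : X) : (fun x => k x • v) =o[l] g := by
  simpa using h.smul_isBigO (isBigO_const_const v (one_ne_zero : (1 : ℝ) ≠ 0) l)

namespace HasSecondDerivAt'

variable {X : Type*} [NormedAddCommGroup X] [NormedSpace ℝ X] {f g : ℝ → X} {t : ℝ} {d1 d2 : X}

theorem hasDerivAt (hf : HasSecondDerivAt' f t d1 d2) : HasDerivAt f d1 t := by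
  rw [hasDerivAt_iff_isLittleO_nhds_zero]
  have hquad : (fun ε : ℝ => (ε ^ 2 / 2) • d2) =o[𝓝 0] fun ε => ε :=
    ((isLittleO_pow_id one_lt_two).const_mul_left (1 / 2)).smul_const d2 |>.congr_left
      fun ε => by ring_nf
  exact (hf.trans (isLittleO_pow_id one_lt_two)).add hquad |>.congr_left fun ε => by abel

theorem isBigO_sub (hf : HasSecondDerivAt' f t d1 d2) :
    (fun ε => f (t + ε) - f t) =O[𝓝 0] fun ε => ε := by
  simpa [Function.comp_def] using
    hf.hasDerivAt.hasFDerivAt.isBigO_sub.comp_tendsto (map_add_left_nhds_zero t).le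

theorem comp {φ : ℝ → ℝ} {e1 e2 : ℝ} (hf : HasSecondDerivAt' f (φ t) d1 d2)
    (hφ : HasSecondDerivAt' φ t e1 e2) :
    HasSecondDerivAt' (fun x => f (φ x)) t (e1 • d1) (e1 ^ 2 • d2 + e2 • d1) := by
  set h : ℝ → ℝ := fun ε => φ (t + ε) - φ t with h_def
  have h_bigO : h =O[𝓝 0] fun ε => ε := hφ.isBigO_sub
  have h_lin : (fun ε => h ε - ε * e1) =o[𝓝 0] fun ε => ε := by
    simpa [h_def, sub_sub] using hasDerivAt_iff_isLittleO_nhds_zero.mp hφ.hasDerivAt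
  have hf_h : (fun ε => f (φ t + h ε) - f (φ t) - h ε • d1 - (h ε ^ 2 / 2) • d2)
      =o[𝓝 0] fun ε => ε ^ 2 :=
    (hf.comp_tendsto (h_bigO.trans_tendsto tendsto_id)).trans_isBigO (h_bigO.pow 2)
  -- `h² - (ε e1)² = (h - ε e1) (h + ε e1)` is `o(ε) · O(ε)`
  have h_sq : (fun ε => (h ε ^ 2 - (ε * e1) ^ 2) / 2) =o[𝓝 0] fun ε => ε ^ 2 := by
    have h_add : (fun ε => h ε + ε * e1) =O[𝓝 0] fun ε => ε :=
      h_bigO.add ((isBigO_const_mul_self e1 _ _).congr_left fun ε => mul_comm _ _)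
    exact ((h_lin.mul_isBigO h_add).const_mul_left (1 / 2)).congr (fun ε => by ring)
      fun ε => by ring
  refine ((hf_h.add (hφ.smul_const d1)).add (h_sq.smul_const d2)).congr_left fun ε => ?_
  simp only [h_def, add_sub_cancel, smul_eq_mul]
  module

theorem smul {c : ℝ → ℝ} {c1 c2 : ℝ} (hc : HasSecondDerivAt' c t c1 c2)
    (hf : HasSecondDerivAt' f t d1 d2) :
    HasSecondDerivAt' (fun x => c x • f x) t (c t • d1 + c1 • f t)
      (c t • d2 + (2 * c1) • d1 + c2 • f t) := by
  have hf_bdd : (fun ε => f (t + ε)) =O[𝓝 0] fun _ => (1 : ℝ) :=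
    (hf.hasDerivAt.continuousAt.tendsto.comp (map_add_left_nhds_zero t).le).isBigO_one ℝ
  have hc_taylor_bdd : (fun ε : ℝ => c t + ε * c1 + ε ^ 2 / 2 * c2) =O[𝓝 0] fun _ => (1 : ℝ) :=
    (Continuous.tendsto (by fun_prop) 0).isBigO_one ℝ
  have hmain : (fun ε => (c (t + ε) - c t - ε • c1 - (ε ^ 2 / 2) • c2) • f (t + ε)
      + (c t + ε * c1 + ε ^ 2 / 2 * c2) • (f (t + ε) - f t - ε • d1 - (ε ^ 2 / 2) • d2))
      =o[𝓝 0] fun ε => ε ^ 2 :=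
    .add (by simpa using hc.smul_isBigO hf_bdd) (by simpa using hc_taylor_bdd.smul_isLittleO hf)
  have hcubic : (fun ε : ℝ => ε ^ 3 • ((c1 / 2) • d2 + (c2 / 2) • d1 + (ε * c2 / 4) • d2))
      =o[𝓝 0] fun ε => ε ^ 2 := by
    have hcont : Continuous fun ε : ℝ => (c1 / 2) • d2 + (c2 / 2) • d1 + (ε * c2 / 4) • d2 := by
      fun_prop
    simpa using (isLittleO_pow_pow (𝕜 := ℝ) (by norm_num : 2 < 3)).smul_isBigO
      ((hcont.tendsto 0).isBigO_one ℝ)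
  refine (hmain.add hcubic).congr_left fun ε => ?_
  simp only [smul_eq_mul]
  module

theorem congr_of_isLittleO (hf : HasSecondDerivAt' f t d1 d2)
    (h : (fun ε => g (t + ε) - f (t + ε)) =o[𝓝 0] fun ε => ε ^ 2) :
    HasSecondDerivAt' g t d1 d2 := by
  have h0 : g t = f t := by
    simpa [sub_eq_zero] using h.isBigO.eq_zero_imp.self_of_nhds
  refine (hf.add h).congr_left fun ε => ?_
  rw [h0]
  abel

theorem isLittleO_sub (hf : HasSecondDerivAt' f t d1 d2) (hg : HasSecondDerivAt' g t d1 d2)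
    (h : f t = g t) : (fun ε => f (t + ε) - g (t + ε)) =o[𝓝 0] fun ε => ε ^ 2 := by
  refine (hf.sub hg).congr_left fun ε => ?_
  rw [h]
  abel

end HasSecondDerivAt'

theorem hasSecondDerivAt'_quadratic (a b c : ℝ) :
    HasSecondDerivAt' (fun ε => a + b * ε + c / 2 * ε ^ 2) 0 b c :=
  (isLittleO_zero _ _).congr_left fun ε => by simp only [smul_eq_mul]; ring

section UnitSphereCurve

variable {X : Type*} [NormedAddCommGroup X] [NormedSpace ℝ X] {f : ℝ → X} {s : ℝ}

theorem eq_zero_of_hasDerivAt_smul_self_of_norm_eq_one (hf : ∀ t, ‖f t‖ = 1) {c : ℝ}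
    (hd : HasDerivAt f (c • f s) s) : c = 0 := by
  have hpos : ∀ᶠ h in 𝓝 (0 : ℝ), 0 < 1 + h * c :=
    (Continuous.tendsto (by fun_prop) 0).eventually_const_lt (by simp)
  have hlin : (fun h : ℝ => h * c) =o[𝓝 0] fun h => h := by
    refine (IsBigO.of_bound 1 ?_).trans_isLittleO (hasDerivAt_iff_isLittleO_nhds_zero.mp hd)
    filter_upwards [hpos] with h hh
    calc ‖h * c‖ = |‖(1 + h * c) • f s‖ - ‖f (s + h)‖| := by
          rw [norm_smul, hf, hf, Real.norm_eq_abs, Real.norm_eq_abs, abs_of_pos hh]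
          ring_nf
      _ ≤ ‖(1 + h * c) • f s - f (s + h)‖ := abs_norm_sub_norm_le _ _
      _ = 1 * ‖f (s + h) - f s - h • c • f s‖ := by
          rw [one_mul, ← norm_neg]
          congr 1
          module
  have h0 : HasDerivAt (fun h : ℝ => h * c) 0 0 :=
    hasDerivAt_iff_isLittleO_nhds_zero.mpr (by simpa using hlin)
  simpa using (h0.unique ((hasDerivAt_id' 0).mul_const c)).symm

theorem linearIndependent_of_hasDerivAt_of_norm_eq_one (hf : ∀ t, ‖f t‖ = 1) {v : X}
    (hd : HasDerivAt f v s) (hv : v ≠ 0) : LinearIndependent ℝ ![f s, v] := by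
  rw [LinearIndependent.pair_iff' (norm_ne_zero_iff.mp (by simp [hf]))]
  rintro c rfl
  exact hv (by rw [eq_zero_of_hasDerivAt_smul_self_of_norm_eq_one hf hd, zero_smul])

end UnitSphereCurve

theorem exists_eq_smul_add_smul_of_finrank_eq_two {K V : Type*} [Field K] [AddCommGroup V]
    [Module K V] {u v : V} (huv : LinearIndependent K ![u, v]) (hV : finrank K V = 2) (w : V) :
    ∃ p q : K, w = p • u + q • v := by
  have hspan := huv.span_eq_top_of_card_eq_finrank (by simp [hV])
  rw [Matrix.range_cons_cons_empty] at hspan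
  obtain ⟨p, q, h⟩ := Submodule.mem_span_pair.mp (hspan ▸ Submodule.mem_top (x := w))
  exact ⟨p, q, h.symm⟩

theorem exists_hasSecondDerivAt'_smul_comp_quadratic {X : Type*} [NormedAddCommGroup X]
    [NormedSpace ℝ X] (hX : finrank ℝ X = 2) {r : ℝ → X} {s c x y : ℝ} {v w d1 : X}
    (hind : LinearIndependent ℝ ![r s, v]) (hs : HasSecondDerivAt' r s v w) (hc : c ≠ 0)
    (hd1 : d1 = x • r s + y • v) (d2 : X) :
    ∃ p δ1 δ2 : ℝ, HasSecondDerivAt'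
      (fun ε => (c + x * ε + p / 2 * ε ^ 2) • r (s + δ1 * ε + δ2 / 2 * ε ^ 2)) 0 d1 d2 := by
  -- With `δ1 = y / c`, the second-order term of `λ • (r ∘ φ)` is
  -- `c δ1² w + p • r s + (c δ2 + 2 x δ1) • v`, which fixes `p` and `δ2`.
  obtain ⟨p, q, hpq⟩ :=
    exists_eq_smul_add_smul_of_finrank_eq_two hind hX (d2 - (c * (y / c) ^ 2) • w)
  obtain ⟨δ2, hδ2⟩ : ∃ δ2, c * δ2 = q - 2 * x * (y / c) := ⟨_, mul_div_cancel₀ _ hc⟩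
  refine ⟨p, y / c, δ2, ?_⟩
  convert (hasSecondDerivAt'_quadratic c x p).smul
    (HasSecondDerivAt'.comp (φ := fun ε => s + y / c * ε + δ2 / 2 * ε ^ 2) (by simpa using hs)
      (hasSecondDerivAt'_quadratic s (y / c) δ2)) using 1
  · simp only [mul_zero, zero_pow two_ne_zero, add_zero]
    rw [hd1, smul_smul, mul_div_cancel₀ _ hc]
    abel
  · simp only [mul_zero, zero_pow two_ne_zero, add_zero]
    rw [sub_eq_iff_eq_add.mp hpq]
    match_scalars
    · ring
    · linear_combination -hδ2
    · ring

theorem isLittleO_norm_sub_of_isLittleO_sub_smul {X α : Type*} [NormedAddCommGroup X]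
    [NormedSpace ℝ X] {l : Filter α} {g u : α → X} {c k : α → ℝ} (hu : ∀ x, ‖u x‖ = 1)
    (hc : ∀ᶠ x in l, 0 ≤ c x) (h : (fun x => g x - c x • u x) =o[l] k) :
    (fun x => ‖g x‖ - c x) =o[l] k := by
  refine (IsBigO.of_bound 1 ?_).trans_isLittleO h
  filter_upwards [hc] with x hx
  calc ‖‖g x‖ - c x‖ = |‖g x‖ - ‖c x • u x‖| := by
        rw [norm_smul, hu, mul_one, Real.norm_eq_abs, Real.norm_eq_abs, abs_of_nonneg hx]
    _ ≤ 1 * ‖g x - c x • u x‖ := by rw [one_mul]; exact abs_norm_sub_norm_le _ _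

theorem nu_twice_differentiable_general
    (X : Type*) [NormedAddCommGroup X] [NormedSpace ℝ X]
    (hdim : finrank ℝ X = 2)
    (r : ℝ → X)
    (hr1 : ∀ t, ‖r t‖ = 1) (hdr : ∀ t, ‖deriv r t‖ = 1)
    (a b s : ℝ)
    (hne : r b - r a ≠ 0)
    (hdir : r b - r a = ‖r b - r a‖ • r s)
    (hb2 : ∃ d : X, HasSecondDerivAt' r b (deriv r b) d)
    (hs2 : ∃ d : X, HasSecondDerivAt' r s (deriv r s) d) :
    ∀ x y : ℝ, deriv r b = x • r s + y • deriv r s →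
      ∃ d2 : ℝ, HasSecondDerivAt' (fun ε : ℝ => ‖r (b + ε) - r a‖) 0 x d2 := by
  intro x y hxy
  obtain ⟨db, hdb⟩ := hb2
  obtain ⟨ds, hds⟩ := hs2
  have hc : 0 < ‖r b - r a‖ := norm_pos_iff.mpr hne
  have hind := linearIndependent_of_hasDerivAt_of_norm_eq_one hr1 hds.hasDerivAt
    (norm_ne_zero_iff.mp (by simp [hdr]))
  have hg : HasSecondDerivAt' (fun ε => r (b + ε) - r a) 0 (deriv r b) db := by
    simpa [HasSecondDerivAt'] using hdb
  obtain ⟨p, δ1, δ2, happrox⟩ :=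
    exists_hasSecondDerivAt'_smul_comp_quadratic hdim hind hds hc.ne' hxy db
  have hpos : ∀ᶠ ε in 𝓝 (0 : ℝ), 0 ≤ ‖r b - r a‖ + x * ε + p / 2 * ε ^ 2 :=
    ((Continuous.tendsto (by fun_prop) 0).eventually_const_lt (by simpa using hc)).mono
      fun _ h => h.le
  have hnorm := isLittleO_norm_sub_of_isLittleO_sub_smul (fun ε => hr1 _) hpos
    (by simpa using hg.isLittleO_sub happrox (by simpa using hdir))
  exact ⟨p, (hasSecondDerivAt'_quadratic _ x p).congr_of_isLittleO (by simpa using hnorm)⟩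

theorem nu_twice_differentiable
    (X : Type*) [NormedAddCommGroup X] [NormedSpace ℝ X] [StrictConvexSpace ℝ X]
    (hdim : finrank ℝ X = 2)
    (hsmooth : ∀ x : X, x ≠ 0 → DifferentiableAt ℝ (fun y : X => ‖y‖) x)
    (r : ℝ → X) (hr : ContDiff ℝ 1 r)
    (hr1 : ∀ t, ‖r t‖ = 1) (hdr : ∀ t, ‖deriv r t‖ = 1)
    (a b s : ℝ)
    (hne : r b - r a ≠ 0)
    (hdir : r b - r a = ‖r b - r a‖ • r s)
    (hb2 : ∃ d : X, HasSecondDerivAt' r b (deriv r b) d)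
    (hs2 : ∃ d : X, HasSecondDerivAt' r s (deriv r s) d) :
    ∀ x y : ℝ, deriv r b = x • r s + y • deriv r s →
      ∃ d2 : ℝ, HasSecondDerivAt' (fun ε : ℝ => ‖r (b + ε) - r a‖) 0 x d2 :=
  nu_twice_differentiable_general X hdim r hr1 hdr a b s hne hdir hb2 hs2
end

section
/- Let X be a strictly convex smooth 2-dimensional Banach space with natural parameterization r : ℝ → S_X. For a fixed direction v = r(s), the map θ : S_X → S_X assigning to each x the unique point θ(x) with {x, θ(x)} = S_X ∩ (x + ℝ·v) is a well-defined continuous involution of S_X. -/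
/-!
On the line `t ↦ x + t • v` the norm is convex, so the parameters at which the line meets the
closed unit ball form a compact interval `[a, b]` containing `0`. Strict convexity of the ball makes
the norm `< 1` strictly inside that interval, so the line meets the sphere exactly at `a` and `b`;
one of them is `0`, and `θ x = x + (a + b) • v`. From `θ x` the parameter `-(a + b)` leads back to
`x`, which gives the involution. The endpoint `b` depends continuously on `x ∈ S_X`: upper
semicontinuity comes from the closedness of the ball, lower semicontinuity from the points
strictly inside it.
-/

open Metric Set Function Module
open Filter Topology

section

variable {X : Type*} [NormedAddCommGroup X] [NormedSpace ℝ X] {x v : X} {t : ℝ}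

def lineBallParams (x v : X) : Set ℝ := {t | ‖x + t • v‖ ≤ 1}

theorem lineBallParams_eq_preimage (x v : X) :
    lineBallParams x v = AffineMap.lineMap x (x + v) ⁻¹' closedBall 0 1 := by
  ext t
  simp [lineBallParams, AffineMap.lineMap_apply, add_comm]

theorem convex_lineBallParams (x v : X) : Convex ℝ (lineBallParams x v) := by
  rw [lineBallParams_eq_preimage]
  exact (convex_closedBall 0 1).affine_preimage _

theorem isClosed_lineBallParams (x v : X) : IsClosed (lineBallParams x v) :=
  isClosed_le (by fun_prop) continuous_const

theorem zero_mem_lineBallParams (hx : ‖x‖ = 1) : 0 ∈ lineBallParams x v := by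
  simp [lineBallParams, hx]

theorem bddAbove_lineBallParams (hx : ‖x‖ = 1) (hv : v ≠ 0) : BddAbove (lineBallParams x v) := by
  refine ⟨2 / ‖v‖, fun t ht => ?_⟩
  rw [le_div_iff₀ (norm_pos_iff.mpr hv)]
  calc t * ‖v‖ ≤ ‖t • v‖ := by
        rw [norm_smul]; exact mul_le_mul_of_nonneg_right (le_abs_self t) (norm_nonneg v)
    _ = ‖(x + t • v) - x‖ := by rw [add_sub_cancel_left]
    _ ≤ ‖x + t • v‖ + ‖x‖ := norm_sub_le _ _
    _ ≤ 2 := by rw [hx]; linarith [ht.out]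

/-- For `‖x‖ = 1` and `v ≠ 0`, the chord of the unit ball through `x` in direction `v` is
`{x + t • v | -chordEnd x (-v) ≤ t ≤ chordEnd x v}`. -/
noncomputable def chordEnd (x v : X) : ℝ := sSup (lineBallParams x v)

/-- For `‖x‖ = 1` one end of the chord is `x` itself (parameter `0`), so this is the parameter of
the other end. -/
noncomputable def otherEnd (x v : X) : ℝ := chordEnd x v - chordEnd x (-v)

section UnitSphere

variable (hx : ‖x‖ = 1) (hv : v ≠ 0)
include hx hv

theorem le_chordEnd (ht : ‖x + t • v‖ ≤ 1) : t ≤ chordEnd x v :=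
  le_csSup (bddAbove_lineBallParams hx hv) ht

theorem chordEnd_nonneg : 0 ≤ chordEnd x v :=
  le_chordEnd hx hv (by simpa using hx.le)

theorem norm_add_chordEnd_smul_le : ‖x + chordEnd x v • v‖ ≤ 1 :=
  (isClosed_lineBallParams x v).csSup_mem ⟨0, zero_mem_lineBallParams hx⟩
    (bddAbove_lineBallParams hx hv)

theorem norm_add_chordEnd_smul : ‖x + chordEnd x v • v‖ = 1 := by
  refine (norm_add_chordEnd_smul_le hx hv).antisymm (not_lt.mp fun hlt => ?_)
  have hnhds : ∀ᶠ t in 𝓝 (chordEnd x v), ‖x + t • v‖ < 1 :=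
    (by fun_prop : Continuous fun t : ℝ => ‖x + t • v‖).continuousAt.eventually_lt
      continuousAt_const hlt
  obtain ⟨t, hgt, ht⟩ := hnhds.exists_gt
  exact hgt.not_ge (le_chordEnd hx hv ht.le)

theorem norm_add_smul_le_one_of_le_chordEnd (h0 : 0 ≤ t) (ht : t ≤ chordEnd x v) :
    ‖x + t • v‖ ≤ 1 :=
  (convex_lineBallParams x v).ordConnected.out (zero_mem_lineBallParams hx)
    (norm_add_chordEnd_smul_le hx hv) ⟨h0, ht⟩

theorem neg_chordEnd_neg_le (ht : ‖x + t • v‖ ≤ 1) : -chordEnd x (-v) ≤ t :=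
  neg_le.mp (le_chordEnd hx (neg_ne_zero.mpr hv) (by simpa using ht))

theorem norm_add_neg_chordEnd_neg_smul : ‖x + (-chordEnd x (-v)) • v‖ = 1 := by
  simpa using norm_add_chordEnd_smul hx (neg_ne_zero.mpr hv)

end UnitSphere

theorem upperSemicontinuousOn_chordEnd (hv : v ≠ 0) :
    UpperSemicontinuousOn (chordEnd · v) (sphere 0 1) := by
  intro x hx t hxt
  rw [mem_sphere_zero_iff_norm] at hx
  have hout : 1 < ‖x + t • v‖ := not_le.mp fun h => hxt.not_ge (le_chordEnd hx hv h)
  have hnear : ∀ᶠ y in 𝓝 x, 1 < ‖y + t • v‖ :=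
    continuousAt_const.eventually_lt (by fun_prop) hout
  filter_upwards [self_mem_nhdsWithin, nhdsWithin_le_nhds hnear] with y hy hyt
  have ht0 : 0 ≤ t := (chordEnd_nonneg hx hv).trans hxt.le
  exact not_le.mp fun h =>
    hyt.not_ge (norm_add_smul_le_one_of_le_chordEnd (mem_sphere_zero_iff_norm.mp hy) hv ht0 h)

section StrictlyConvex

variable [StrictConvexSpace ℝ X]

theorem norm_add_smul_lt_of_mem_Ioo {a b r : ℝ} (hv : v ≠ 0)
    (ha : ‖x + a • v‖ ≤ r) (hb : ‖x + b • v‖ ≤ r) (ht : t ∈ Ioo a b) : ‖x + t • v‖ < r := by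
  obtain ⟨hat, htb⟩ := ht
  have hab : b - a ≠ 0 := by linarith
  have hne : x + a • v ≠ x + b • v := fun h =>
    hab (sub_eq_zero.mpr (smul_left_injective ℝ hv (add_left_cancel h).symm))
  have hsum : (b - t) / (b - a) + (t - a) / (b - a) = 1 := by field_simp; ring
  have hcoef : (b - t) / (b - a) * a + (t - a) / (b - a) * b = t := by field_simp; ring
  have hcombo : ((b - t) / (b - a)) • (x + a • v) + ((t - a) / (b - a)) • (x + b • v)
      = x + t • v := by
    calc _ = ((b - t) / (b - a) + (t - a) / (b - a)) • x
          + ((b - t) / (b - a) * a + (t - a) / (b - a) * b) • v := by module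
      _ = x + t • v := by rw [hsum, hcoef, one_smul]
  rw [← hcombo]
  exact norm_combo_lt_of_ne ha hb hne (div_pos (by linarith) (by linarith))
    (div_pos (by linarith) (by linarith)) hsum

section UnitSphere

variable (hx : ‖x‖ = 1) (hv : v ≠ 0)
include hx hv

theorem eq_or_eq_chordEnd_of_norm_add_smul_eq_one (ht : ‖x + t • v‖ = 1) :
    t = -chordEnd x (-v) ∨ t = chordEnd x v := by
  by_contra! h
  have hmem : t ∈ Ioo (-chordEnd x (-v)) (chordEnd x v) :=
    ⟨(neg_chordEnd_neg_le hx hv ht.le).lt_of_ne h.1.symm, (le_chordEnd hx hv ht.le).lt_of_ne h.2⟩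
  exact (norm_add_smul_lt_of_mem_Ioo hv (norm_add_neg_chordEnd_neg_smul hx hv).le
    (norm_add_chordEnd_smul hx hv).le hmem).ne ht

theorem chordEnd_neg_eq_zero_or_chordEnd_eq_zero : chordEnd x (-v) = 0 ∨ chordEnd x v = 0 := by
  rcases eq_or_eq_chordEnd_of_norm_add_smul_eq_one hx hv (t := 0) (by simpa using hx) with h | h
  · exact .inl (neg_eq_zero.mp h.symm)
  · exact .inr h.symm

theorem setOf_norm_add_smul_eq_one : {t : ℝ | ‖x + t • v‖ = 1} = {0, otherEnd x v} := by
  have h0 := chordEnd_neg_eq_zero_or_chordEnd_eq_zero hx hv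
  ext t
  constructor
  · intro ht
    rcases eq_or_eq_chordEnd_of_norm_add_smul_eq_one hx hv ht with rfl | rfl <;>
      rcases h0 with h0 | h0 <;> simp [otherEnd, h0]
  · rintro (rfl | rfl)
    · simpa using hx
    · rcases h0 with h0 | h0
      · simpa [otherEnd, h0] using norm_add_chordEnd_smul hx hv
      · simpa [otherEnd, h0] using norm_add_neg_chordEnd_neg_smul hx hv

theorem norm_add_otherEnd_smul : ‖x + otherEnd x v • v‖ = 1 := by
  have h : otherEnd x v ∈ {t : ℝ | ‖x + t • v‖ = 1} := by
    rw [setOf_norm_add_smul_eq_one hx hv]; exact mem_insert_of_mem 0 rfl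
  exact h

theorem otherEnd_add_otherEnd_smul : otherEnd (x + otherEnd x v • v) v = -otherEnd x v := by
  have hback : -otherEnd x v ∈ {t : ℝ | ‖x + otherEnd x v • v + t • v‖ = 1} := by
    simpa using hx
  rw [setOf_norm_add_smul_eq_one (norm_add_otherEnd_smul hx hv) hv] at hback
  rcases hback with h | h
  · have h0 : otherEnd x v = 0 := neg_eq_zero.mp h
    simp [h0]
  · exact h.symm

end UnitSphere

theorem lowerSemicontinuousOn_chordEnd (hv : v ≠ 0) :
    LowerSemicontinuousOn (chordEnd · v) (sphere 0 1) := by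
  intro x hx t htx
  rw [mem_sphere_zero_iff_norm] at hx
  rcases lt_or_ge t 0 with ht0 | ht0
  · filter_upwards [self_mem_nhdsWithin] with y hy
    exact ht0.trans_le (chordEnd_nonneg (mem_sphere_zero_iff_norm.mp hy) hv)
  obtain ⟨s, hts, hsx⟩ := exists_between htx
  have hin : ‖x + s • v‖ < 1 :=
    norm_add_smul_lt_of_mem_Ioo hv (norm_add_neg_chordEnd_neg_smul hx hv).le
      (norm_add_chordEnd_smul hx hv).le
      ⟨by linarith [chordEnd_nonneg hx (neg_ne_zero.mpr hv)], hsx⟩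
  have hnear : ∀ᶠ y in 𝓝 x, ‖y + s • v‖ < 1 :=
    (by fun_prop : ContinuousAt (fun y => ‖y + s • v‖) x).eventually_lt continuousAt_const hin
  filter_upwards [self_mem_nhdsWithin, nhdsWithin_le_nhds hnear] with y hy hys
  exact hts.trans_le (le_chordEnd (mem_sphere_zero_iff_norm.mp hy) hv hys.le)

theorem continuousOn_chordEnd (hv : v ≠ 0) : ContinuousOn (chordEnd · v) (sphere 0 1) :=
  continuousOn_iff_lower_upperSemicontinuousOn.mpr
    ⟨lowerSemicontinuousOn_chordEnd hv, upperSemicontinuousOn_chordEnd hv⟩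

theorem continuousOn_otherEnd (hv : v ≠ 0) : ContinuousOn (otherEnd · v) (sphere 0 1) :=
  (continuousOn_chordEnd hv).sub (continuousOn_chordEnd (neg_ne_zero.mpr hv))

end StrictlyConvex

end

theorem exists_continuous_involution_theta_general
    (X : Type*) [NormedAddCommGroup X] [NormedSpace ℝ X] [StrictConvexSpace ℝ X]
    (r : ℝ → X)
    (hr1 : ∀ t, ‖r t‖ = 1)
    (s : ℝ) (v : X) (hv : v = r s) :
    ∃ θ : sphere (0 : X) 1 → sphere (0 : X) 1,
      Continuous θ ∧ (∀ x, θ (θ x) = x) ∧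
      ∀ x : sphere (0 : X) 1,
        {y : X | ‖y‖ = 1 ∧ ∃ t : ℝ, y = (x : X) + t • v} = {(x : X), ((θ x : X))} := by
  have hv0 : v ≠ 0 := norm_ne_zero_iff.mp (by rw [hv, hr1]; exact one_ne_zero)
  have hx (x : sphere (0 : X) 1) : ‖(x : X)‖ = 1 := norm_eq_of_mem_sphere x
  refine ⟨fun x => ⟨x + otherEnd (x : X) v • v,
    mem_sphere_zero_iff_norm.mpr (norm_add_otherEnd_smul (hx x) hv0)⟩, ?_, fun x => ?_, fun x => ?_⟩
  · have hc : Continuous fun x : sphere (0 : X) 1 => otherEnd (x : X) v :=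
      (continuousOn_otherEnd hv0).domRestrict
    fun_prop
  · ext1
    simp only [otherEnd_add_otherEnd_smul (hx x) hv0]
    module
  · have hline : {y : X | ‖y‖ = 1 ∧ ∃ t : ℝ, y = (x : X) + t • v}
        = (fun t : ℝ => (x : X) + t • v) '' {t : ℝ | ‖(x : X) + t • v‖ = 1} := by
      ext y
      constructor
      · rintro ⟨hy, t, rfl⟩
        exact ⟨t, hy, rfl⟩
      · rintro ⟨t, ht, rfl⟩
        exact ⟨ht, t, rfl⟩
    rw [hline, setOf_norm_add_smul_eq_one (hx x) hv0, image_pair, zero_smul, add_zero]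

theorem exists_continuous_involution_theta
    (X : Type*) [NormedAddCommGroup X] [NormedSpace ℝ X] [StrictConvexSpace ℝ X]
    (hdim : finrank ℝ X = 2)
    (hsmooth : ∀ x : X, x ≠ 0 → DifferentiableAt ℝ (fun y : X => ‖y‖) x)
    (r : ℝ → X) (hr : ContDiff ℝ 1 r)
    (hr1 : ∀ t, ‖r t‖ = 1) (hdr : ∀ t, ‖deriv r t‖ = 1)
    (s : ℝ) (v : X) (hv : v = r s) :
    ∃ θ : sphere (0 : X) 1 → sphere (0 : X) 1,
      Continuous θ ∧ (∀ x, θ (θ x) = x) ∧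
      ∀ x : sphere (0 : X) 1,
        {y : X | ‖y‖ = 1 ∧ ∃ t : ℝ, y = (x : X) + t • v} = {(x : X), ((θ x : X))} :=
  exists_continuous_involution_theta_general X r hr1 s v hv
end

section
/- Let g : ℝ → ℝ be non-decreasing, s ∈ ℝ, and suppose there are constants K ≥ 0 and δ > 0 such that |∫₀^{2ε} (g(s+u) - g(s)) du| ≤ K·ε² for all ε with |ε| < δ. Then g is Lipschitz at s: |g(s+ε)-g(s)| ≤ 4K·|ε| for all ε with |ε| < δ/2. -/
open Set Function intervalIntegral

theorem lipschitz_of_integral_bound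
    (g : ℝ → ℝ) (hg : Monotone g) (s : ℝ) (K δ : ℝ) (hK : 0 ≤ K) (hδ : 0 < δ)
    (h : ∀ ε : ℝ, |ε| < δ → |∫ u in (0 : ℝ)..(2 * ε), (g (s + u) - g s)| ≤ K * ε ^ 2) :
    ∀ ε : ℝ, |ε| < δ / 2 → |g (s + ε) - g s| ≤ 4 * K * |ε| := by
  intro ε hε
  have hδε : |ε| < δ := lt_trans hε (by linarith)
  have hKε := h ε hδε
  have hfm : Monotone (fun u => g (s + u) - g s) := fun a b hab => by
    simp only [sub_le_sub_iff_right]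
    exact hg (by linarith)
  have hint : ∀ a b : ℝ, IntervalIntegrable (fun u => g (s + u) - g s)
      MeasureTheory.volume a b := fun a b => hfm.intervalIntegrable
  rcases lt_trichotomy ε 0 with hε0 | hε0 | hε0
  · have h1 : g (s + ε) ≤ g s := hg (by linarith)
    have habs : |g (s + ε) - g s| = g s - g (s + ε) := by
      rw [abs_sub_comm]; exact abs_of_nonneg (by linarith)
    have hsplit : (∫ u in (2*ε)..(0:ℝ), (g (s + u) - g s)) =
        (∫ u in (2*ε)..ε, (g (s + u) - g s)) + ∫ u in ε..(0:ℝ), (g (s + u) - g s) :=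
      (intervalIntegral.integral_add_adjacent_intervals (hint _ _) (hint _ _)).symm
    have hb1 : (∫ u in (2*ε)..ε, (g (s + u) - g s)) ≤
        ∫ _u in (2*ε)..ε, (g (s + ε) - g s) := by
      apply intervalIntegral.integral_mono_on (by linarith) (hint _ _) intervalIntegrable_const
      intro x hx
      exact sub_le_sub_right (hg (by linarith [hx.2])) _
    rw [intervalIntegral.integral_const, smul_eq_mul] at hb1
    have hb2 : (∫ u in ε..(0:ℝ), (g (s + u) - g s)) ≤ 0 := by
      have : (∫ u in ε..(0:ℝ), (g (s + u) - g s)) ≤ ∫ _u in ε..(0:ℝ), (0:ℝ) := by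
        apply intervalIntegral.integral_mono_on (by linarith) (hint _ _) intervalIntegrable_const
        intro x hx
        have : g (s + x) ≤ g s := hg (by linarith [hx.2])
        linarith
      simpa using this
    have hneg : (∫ u in (0:ℝ)..(2*ε), (g (s + u) - g s)) =
        -∫ u in (2*ε)..(0:ℝ), (g (s + u) - g s) :=
      (intervalIntegral.integral_symm _ _)
    have hlow : (-ε) * (g s - g (s + ε)) ≤ ∫ u in (0:ℝ)..(2*ε), (g (s + u) - g s) := by
      rw [hneg, hsplit]; nlinarith
    have habs2 : (∫ u in (0:ℝ)..(2*ε), (g (s + u) - g s)) ≤ K * ε ^ 2 :=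
      le_trans (le_abs_self _) hKε
    rw [habs, abs_of_neg hε0]
    nlinarith
  · simp [hε0]
  · have h1 : g s ≤ g (s + ε) := hg (by linarith)
    have habs : |g (s + ε) - g s| = g (s + ε) - g s := abs_of_nonneg (by linarith)
    have hsplit : (∫ u in (0:ℝ)..(2*ε), (g (s + u) - g s)) =
        (∫ u in (0:ℝ)..ε, (g (s + u) - g s)) + ∫ u in ε..(2*ε), (g (s + u) - g s) :=
      (intervalIntegral.integral_add_adjacent_intervals (hint _ _) (hint _ _)).symm
    have hb1 : (∫ _u in ε..(2*ε), (g (s + ε) - g s)) ≤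
        ∫ u in ε..(2*ε), (g (s + u) - g s) := by
      apply intervalIntegral.integral_mono_on (by linarith) intervalIntegrable_const (hint _ _)
      intro x hx
      exact sub_le_sub_right (hg (by linarith [hx.1])) _
    rw [intervalIntegral.integral_const, smul_eq_mul] at hb1
    have hb2 : (0:ℝ) ≤ ∫ u in (0:ℝ)..ε, (g (s + u) - g s) := by
      have : (∫ _u in (0:ℝ)..ε, (0:ℝ)) ≤ ∫ u in (0:ℝ)..ε, (g (s + u) - g s) := by
        apply intervalIntegral.integral_mono_on (by linarith) intervalIntegrable_const (hint _ _)
        intro x hx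
        have : g s ≤ g (s + x) := hg (by linarith [hx.1])
        linarith
      simpa using this
    have habs2 : (∫ u in (0:ℝ)..(2*ε), (g (s + u) - g s)) ≤ K * ε ^ 2 :=
      le_trans (le_abs_self _) hKε
    rw [habs, abs_of_pos hε0]
    nlinarith
end

section
/- Let X be a 2-dimensional real normed space and f : S_X → S_Y a surjective isometry onto the unit sphere of a real Banach space Y. Then Y is 2-dimensional. -/
/-!
A surjective isometry of unit spheres is a homeomorphism, so it suffices to read off the dimension
of `Y` from the topology of its unit sphere. The sphere of a 2-dimensional space is connected and
is disconnected by removing an antipodal pair `±x`: a functional vanishing exactly on `ℝ x` takes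
both signs on what is left. The sphere of a line is two points, hence disconnected. In dimension
at least 3 (possibly infinite) the sphere minus finitely many points is still path connected: it
is the radial projection of the complement of finitely many rays, and any two points of that
complement are joined through a third point lying outside the planes they span with the rays.
-/

open Metric Set Function Module Submodule

section LinearAlgebra

variable {𝕜 E : Type*} [Field 𝕜] [AddCommGroup E] [Module 𝕜 E]

theorem segment_inter_subset_left [LinearOrder 𝕜] [IsStrictOrderedRing 𝕜] {a c : E}
    {S : Submodule 𝕜 E} (hc : c ∉ span 𝕜 {a} ⊔ S) : segment 𝕜 a c ∩ S ⊆ {a} := by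
  rintro _ ⟨⟨s, t, -, ht, hst, rfl⟩, hw⟩
  rcases ht.eq_or_lt with rfl | ht
  · simp [show s = 1 by linarith]
  · refine absurd ?_ hc
    have hc_eq : c = t⁻¹ • ((s • a + t • c) - s • a) := by
      rw [add_sub_cancel_left, smul_smul, inv_mul_cancel₀ ht.ne', one_smul]
    rw [hc_eq]
    exact smul_mem _ _ <| sub_mem (mem_sup_right hw)
      (mem_sup_left (smul_mem _ _ (mem_span_singleton_self a)))

theorem span_pair_ne_top (h : 2 < Module.rank 𝕜 E) (a b : E) : span 𝕜 {a, b} ≠ ⊤ := by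
  classical
  intro htop
  have hle : Module.rank 𝕜 (span 𝕜 ({a, b} : Finset E) : Submodule 𝕜 E) ≤ 2 :=
    (rank_span_finset_le _).trans (by exact_mod_cast Finset.card_le_two)
  rw [Finset.coe_pair, htop, rank_top] at hle
  exact hle.not_gt h

theorem exists_forall_notMem_span_pair [Infinite 𝕜] (h : 2 < Module.rank 𝕜 E) (a b : E)
    {s : Set E} (hs : s.Finite) : ∃ c, ∀ p ∈ s, c ∉ span 𝕜 {a, p} ∧ c ∉ span 𝕜 {b, p} := by
  have := hs.to_subtype
  by_contra! hcover
  obtain ⟨i, hi⟩ := Subspace.exists_eq_top_of_iUnion_eq_univ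
    (p := fun i : Bool × s => span 𝕜 {cond i.1 a b, (i.2 : E)}) <| by
      refine eq_univ_of_forall fun c => ?_
      obtain ⟨p, hp, hc⟩ := hcover c
      rw [mem_iUnion]
      by_cases hca : c ∈ span 𝕜 {a, p}
      · exact ⟨(true, ⟨p, hp⟩), hca⟩
      · exact ⟨(false, ⟨p, hp⟩), hc hca⟩
  exact span_pair_ne_top h _ _ hi

theorem exists_ker_eq_of_finrank_add_one [FiniteDimensional 𝕜 E] {K : Submodule 𝕜 E}
    (hK : finrank 𝕜 K + 1 = finrank 𝕜 E) : ∃ φ : E →ₗ[𝕜] 𝕜, φ ≠ 0 ∧ LinearMap.ker φ = K := by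
  have hKtop : K < ⊤ := lt_top_iff_ne_top.mpr fun h => by
    rw [h, finrank_top] at hK
    omega
  obtain ⟨φ, hφ, hKφ⟩ := K.exists_le_ker_of_lt_top hKtop
  have hker : finrank 𝕜 (LinearMap.ker φ) < finrank 𝕜 E :=
    Submodule.finrank_lt (mt LinearMap.ker_eq_top.mp hφ)
  have hKle := Submodule.finrank_mono hKφ
  exact ⟨φ, hφ, (eq_of_le_of_finrank_eq hKφ (by omega)).symm⟩

end LinearAlgebra

section Sphere

variable {E : Type*} [NormedAddCommGroup E] [NormedSpace ℝ E]

theorem isPathConnected_compl_rays (h : 2 < Module.rank ℝ E) {s : Set E} (hs : s.Finite) :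
    IsPathConnected {v : E | ∀ p ∈ s, ∀ t : ℝ, 0 ≤ t → v ≠ t • p} := by
  set V := {v : E | ∀ p ∈ s, ∀ t : ℝ, 0 ≤ t → v ≠ t • p}
  have segment_subset : ∀ a ∈ V, ∀ c, (∀ p ∈ s, c ∉ span ℝ {a, p}) → segment ℝ a c ⊆ V := by
    rintro a ha c hc w hw p hp t ht rfl
    have hwa : t • p = a := segment_inter_subset_left (S := span ℝ {p})
      (by simpa only [← span_insert] using hc p hp) ⟨hw, smul_mem _ _ (mem_span_singleton_self p)⟩
    exact ha p hp t ht hwa.symm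
  rw [isPathConnected_iff]
  constructor
  · obtain ⟨c, hc⟩ := exists_forall_notMem_span_pair (𝕜 := ℝ) h 0 0 hs
    refine ⟨c, fun p hp t _ hct => (hc p hp).1 ?_⟩
    rw [hct]
    exact smul_mem _ _ (subset_span (by simp))
  · intro a ha b hb
    obtain ⟨c, hc⟩ := exists_forall_notMem_span_pair (𝕜 := ℝ) h a b hs
    exact (JoinedIn.of_segment_subset (segment_subset a ha c fun p hp => (hc p hp).1)).trans
      (JoinedIn.of_segment_subset (segment_subset b hb c fun p hp => (hc p hp).2)).symm

theorem isPathConnected_sphere_diff (h : 2 < Module.rank ℝ E) {r : ℝ} (hr : 0 < r) {s : Set E}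
    (hs : s.Finite) : IsPathConnected (sphere (0 : E) r \ s) := by
  -- the degenerate ray through `0` keeps `V` away from the discontinuity of the radial projection
  set V := {v : E | ∀ p ∈ insert 0 (s ∩ sphere 0 r), ∀ t : ℝ, 0 ≤ t → v ≠ t • p}
  have hV0 : ∀ v ∈ V, v ≠ 0 := fun v hv => by simpa using hv 0 (mem_insert _ _) 0 le_rfl
  have hV : sphere (0 : E) r \ s = (fun v => (r * ‖v‖⁻¹) • v) '' V := by
    apply Subset.antisymm
    · rintro y ⟨hy, hys⟩
      refine ⟨y, ?_, by simp [mem_sphere_zero_iff_norm.mp hy, hr.ne']⟩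
      rintro p (rfl | ⟨hps, hp⟩) t ht rfl
      · simp [hr.ne] at hy
      · rw [mem_sphere_zero_iff_norm] at hy hp
        rw [norm_smul, hp, Real.norm_of_nonneg ht] at hy
        obtain rfl : t = 1 := by simpa [hr.ne'] using hy
        exact hys (by simpa using hps)
    · rintro _ ⟨v, hv, rfl⟩
      have hv' : ‖v‖ ≠ 0 := norm_ne_zero_iff.mpr (hV0 v hv)
      have hsphere : (r * ‖v‖⁻¹) • v ∈ sphere (0 : E) r := by
        rw [mem_sphere_zero_iff_norm, norm_smul, Real.norm_of_nonneg (by positivity),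
          mul_assoc, inv_mul_cancel₀ hv', mul_one]
      refine ⟨hsphere, fun hs' => hv _ (mem_insert_of_mem _ ⟨hs', hsphere⟩) (‖v‖ / r)
        (by positivity) ?_⟩
      rw [smul_smul, show ‖v‖ / r * (r * ‖v‖⁻¹) = 1 by field_simp, one_smul]
  rw [hV]
  refine (isPathConnected_compl_rays h ((hs.inter_of_left _).insert 0)).image' ?_
  intro v hv
  have := hV0 v hv
  fun_prop (disch := simpa)

theorem not_isPreconnected_sphere_diff_ker {φ : E →ₗ[ℝ] ℝ} (hφc : Continuous φ) (hφ : φ ≠ 0)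
    {r : ℝ} (hr : 0 < r) : ¬IsPreconnected (sphere (0 : E) r \ LinearMap.ker φ) := by
  intro hpre
  obtain ⟨w, hw⟩ : ∃ w, φ w ≠ 0 := by
    by_contra! h
    exact hφ (LinearMap.ext h)
  have hw0 : w ≠ 0 := by rintro rfl; simp at hw
  set u := (r / ‖w‖) • w
  have hu : ∀ v ∈ ({u, -u} : Set E), v ∈ sphere (0 : E) r \ LinearMap.ker φ := by
    have hu1 : ‖u‖ = r := by
      rw [norm_smul, Real.norm_of_nonneg (by positivity),
        div_mul_cancel₀ _ (norm_ne_zero_iff.mpr hw0)]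
    have hφu : φ u ≠ 0 := by simp [u, hr.ne', hw0, hw]
    rintro v (rfl | rfl) <;> simpa [hu1] using hφu
  have hord := isPreconnected_iff_ordConnected.mp (hpre.image φ hφc.continuousOn)
  obtain ⟨v, hv, hv0⟩ : (0 : ℝ) ∈ φ '' (sphere (0 : E) r \ LinearMap.ker φ) := by
    refine hord.uIcc_subset (mem_image_of_mem _ (hu u (by simp)))
      (mem_image_of_mem _ (hu (-u) (by simp))) ?_
    rw [map_neg, mem_uIcc]
    rcases le_total 0 (φ u) with h | h
    · exact Or.inr ⟨by linarith, h⟩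
    · exact Or.inl ⟨h, by linarith⟩
  exact hv.2 hv0

theorem not_isPreconnected_sphere_diff_of_finrank_add_one [FiniteDimensional ℝ E]
    {K : Submodule ℝ E} (hK : finrank ℝ K + 1 = finrank ℝ E) {r : ℝ} (hr : 0 < r) :
    ¬IsPreconnected (sphere (0 : E) r \ K) := by
  obtain ⟨φ, hφ, rfl⟩ := exists_ker_eq_of_finrank_add_one hK
  exact not_isPreconnected_sphere_diff_ker (LinearMap.continuous_of_finiteDimensional φ) hφ hr

theorem not_isPreconnected_sphere_of_finrank_eq_one (h : finrank ℝ E = 1) {r : ℝ} (hr : 0 < r) :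
    ¬IsPreconnected (sphere (0 : E) r) := by
  have : FiniteDimensional ℝ E := Module.finite_of_finrank_eq_succ h
  have := not_isPreconnected_sphere_diff_of_finrank_add_one (K := (⊥ : Submodule ℝ E))
    (by simp [h]) hr
  rwa [Submodule.bot_coe, sdiff_singleton_eq_self (by simp [hr.ne])] at this

theorem sphere_norm_inter_span_singleton (x : E) :
    sphere (0 : E) ‖x‖ ∩ span ℝ {x} = {x, -x} := by
  ext y
  simp only [mem_inter_iff, mem_sphere_zero_iff_norm, SetLike.mem_coe, mem_span_singleton,
    mem_insert_iff, mem_singleton_iff]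
  constructor
  · rintro ⟨hy, c, rfl⟩
    rcases eq_or_ne x 0 with rfl | hx
    · simp
    rw [norm_smul, Real.norm_eq_abs] at hy
    rcases abs_eq (zero_le_one' ℝ) |>.mp (by simpa [hx] using hy) with rfl | rfl <;> simp
  · rintro (rfl | rfl)
    · exact ⟨rfl, 1, one_smul _ _⟩
    · exact ⟨norm_neg _, -1, neg_one_smul _ _⟩

theorem not_isPreconnected_sphere_diff_antipodal (h : finrank ℝ E = 2) {x : E} (hx : x ≠ 0) :
    ¬IsPreconnected (sphere (0 : E) ‖x‖ \ {x, -x}) := by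
  have : FiniteDimensional ℝ E := Module.finite_of_finrank_eq_succ h
  have := not_isPreconnected_sphere_diff_of_finrank_add_one (K := span ℝ {x})
    (by rw [finrank_span_singleton hx, h]) (norm_pos_iff.mpr hx)
  rwa [← sdiff_self_inter, sphere_norm_inter_span_singleton] at this

end Sphere

theorem image_val_compl_pair {α : Type*} {s : Set α} (a b : s) :
    ((↑) : s → α) '' {a, b}ᶜ = s \ {↑a, ↑b} := by
  rw [image_compl_eq_range_sdiff_image Subtype.val_injective, image_pair, Subtype.range_coe]

theorem Homeomorph.isPreconnected_image_val_image {α β : Type*} [TopologicalSpace α]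
    [TopologicalSpace β] {s : Set α} {t : Set β} (e : s ≃ₜ t) (u : Set s) :
    IsPreconnected (((↑) : t → β) '' (e '' u)) ↔ IsPreconnected (((↑) : s → α) '' u) :=
  Topology.IsInducing.subtypeVal.isPreconnected_image.trans <|
    e.isPreconnected_image.trans Topology.IsInducing.subtypeVal.isPreconnected_image.symm

theorem finrank_eq_two_of_homeomorph_sphere {X Y : Type*} [NormedAddCommGroup X]
    [NormedSpace ℝ X] [NormedAddCommGroup Y] [NormedSpace ℝ Y] (hdim : finrank ℝ X = 2)
    (e : sphere (0 : X) 1 ≃ₜ sphere (0 : Y) 1) : finrank ℝ Y = 2 := by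
  have : FiniteDimensional ℝ X := Module.finite_of_finrank_eq_succ hdim
  have : Nontrivial X := Module.nontrivial_of_finrank_eq_succ hdim
  obtain ⟨a⟩ : Nonempty (sphere (0 : X) 1) :=
    (NormedSpace.sphere_nonempty.mpr zero_le_one).to_subtype
  have hrank : Module.rank ℝ Y ≤ 2 := by
    by_contra! h
    have hY := (isPathConnected_sphere_diff h one_pos
      (toFinite {(e a : Y), ↑(e (-a))})).isConnected.isPreconnected
    rw [← image_val_compl_pair, ← image_pair, ← e.image_compl,
      e.isPreconnected_image_val_image, image_val_compl_pair, coe_neg_sphere] at hY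
    refine not_isPreconnected_sphere_diff_antipodal hdim (ne_zero_of_mem_sphere one_ne_zero a) ?_
    rwa [norm_eq_of_mem_sphere]
  have : FiniteDimensional ℝ Y :=
    Module.rank_lt_aleph0_iff.mp (hrank.trans_lt Cardinal.natCast_lt_aleph0)
  have : Nontrivial Y := ⟨⟨e a, 0, ne_zero_of_mem_sphere one_ne_zero (e a)⟩⟩
  have hY1 : finrank ℝ Y ≠ 1 := fun h => by
    have hX : IsPreconnected (((↑) : sphere (0 : X) 1 → X) '' univ) := by
      rw [Subtype.coe_image_univ]
      exact (isConnected_sphere (by rw [← finrank_eq_rank, hdim]; norm_num) 0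
        zero_le_one).isPreconnected
    rw [← e.isPreconnected_image_val_image, image_univ_of_surjective e.surjective,
      Subtype.coe_image_univ] at hX
    exact not_isPreconnected_sphere_of_finrank_eq_one h one_pos hX
  have hY2 : finrank ℝ Y ≤ 2 := finrank_le_of_rank_le hrank
  have hY0 : 0 < finrank ℝ Y := Module.finrank_pos
  omega

theorem target_two_dimensional_general
    (X : Type*) [NormedAddCommGroup X] [NormedSpace ℝ X]
    (hdim : finrank ℝ X = 2)
    (Y : Type*) [NormedAddCommGroup Y] [NormedSpace ℝ Y]
    (f : sphere (0 : X) 1 → sphere (0 : Y) 1)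
    (hsurj : Surjective f)
    (hiso : ∀ a b : sphere (0 : X) 1, dist (f a) (f b) = dist a b) :
    finrank ℝ Y = 2 := by
  have hf : Isometry f := Isometry.of_dist_eq hiso
  exact finrank_eq_two_of_homeomorph_sphere hdim
    (IsometryEquiv.mk (.ofBijective f ⟨hf.injective, hsurj⟩) hf).toHomeomorph

theorem target_two_dimensional
    (X : Type*) [NormedAddCommGroup X] [NormedSpace ℝ X]
    (hdim : finrank ℝ X = 2)
    (Y : Type*) [NormedAddCommGroup Y] [NormedSpace ℝ Y] [CompleteSpace Y]
    (f : sphere (0 : X) 1 → sphere (0 : Y) 1)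
    (hsurj : Surjective f)
    (hiso : ∀ a b : sphere (0 : X) 1, dist (f a) (f b) = dist a b) :
    finrank ℝ Y = 2 :=
  target_two_dimensional_general X hdim Y f hsurj hiso
end
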